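/- arXiv:2212.14091 — 6 statements merged into one kernel-verified Lean document; each statement's English description precedes it below -/
import Mathlib

section
/- Let $\mathcal{B}$ and $\mathcal{S}$ be collections of sets in $\mathbb{R}^d$ and $q \in \mathbb{N}$, such that every subfamily of $\mathcal{B}$ satisfying the $(\aleph_0,q)$-property with respect to $\mathcal{S}$ is finitely pierceable by $\mathcal{S}$ (i.e., the monochromatic $(\aleph_0,q)$-theorem holds). If $\{\mathcal{F}_n\}_{n\in\mathbb{N}}$ is a sequence of subfamilies of $\mathcal{B}$ satisfying the heterochromatic $(\aleph_0,q)$-property with respect to $\mathcal{S}$, then there exists $N \in \mathbb{N}$ and a finite collection $\mathcal{K} \subseteq \mathcal{S}$ such that for all $n > N$ and all $C \in \mathcal{F}_n$, $C$ intersects some member of $\mathcal{K}$. -/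
/-- A family `𝓕` is finitely pierceable by `𝒮`. -/
def FinPierceBy {d : ℕ} (𝒮 𝓕 : Set (Set (EuclideanSpace ℝ (Fin d)))) : Prop :=
  ∃ T ⊆ 𝒮, T.Finite ∧ ∀ B ∈ 𝓕, ∃ A ∈ T, (A ∩ B).Nonempty

/-- The (monochromatic) `(ℵ₀,q)`-property with respect to `𝒮`: every infinite
sequence of distinct members contains `q` sets pierced by a single member of `𝒮`. -/
def AlephProp {d : ℕ} (q : ℕ) (𝒮 : Set (Set (EuclideanSpace ℝ (Fin d))))
    (𝓕 : Set (Set (EuclideanSpace ℝ (Fin d)))) : Prop :=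
  ∀ B : ℕ → Set (EuclideanSpace ℝ (Fin d)), Function.Injective B → (∀ n, B n ∈ 𝓕) →
    ∃ A ∈ 𝒮, ∃ idx : Finset ℕ, idx.card = q ∧ ∀ n ∈ idx, (A ∩ B n).Nonempty

/-- The heterochromatic `(ℵ₀, q)`-property with respect to `𝒮`. -/
def HeteroProp {d : ℕ} (q : ℕ) (𝒮 : Set (Set (EuclideanSpace ℝ (Fin d))))
    (Fam : ℕ → Set (Set (EuclideanSpace ℝ (Fin d)))) : Prop :=
  ∀ i : ℕ → ℕ, StrictMono i →
    ∀ B : ℕ → Set (EuclideanSpace ℝ (Fin d)), (∀ n, B n ∈ Fam (i n)) →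
      ∃ A ∈ 𝒮, ∃ idx : Finset ℕ, idx.card = q ∧ Set.InjOn B ↑idx ∧
        ∀ n ∈ idx, (A ∩ B n).Nonempty

/-- Extract a subsequence along which a given property (satisfied beyond every
index) holds everywhere. -/
lemma hetero_subseq_aux (P : ℕ → Prop) (h : ∀ N, ∃ i, N < i ∧ P i) :
    ∃ φ : ℕ → ℕ, StrictMono φ ∧ ∀ t, P (φ t) := by
  choose g hg1 hg2 using h
  refine ⟨fun t => g^[t + 1] 0, strictMono_nat_of_lt_succ fun t => ?_, fun t => ?_⟩
  · show g^[t + 1] 0 < g^[t + 1 + 1] 0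
    rw [Function.iterate_succ_apply' g (t + 1) 0]
    exact hg1 _
  · show P (g^[t + 1] 0)
    rw [Function.iterate_succ_apply' g t 0]
    exact hg2 _

/-- If all fibers of `f : ℕ → ℕ` are finite, then there is a subsequence along
which `f` is strictly monotone. -/
lemma hetero_ext_lemma (f : ℕ → ℕ) (hf : ∀ m, {i | f i = m}.Finite) :
    ∃ φ : ℕ → ℕ, StrictMono φ ∧ StrictMono (f ∘ φ) := by
  have key : ∀ j, ∃ i, j < i ∧ f j < f i := by
    intro j
    have h1 : {i | f i ≤ f j}.Finite := by
      have he : {i | f i ≤ f j} = ⋃ m ∈ Finset.range (f j + 1), {i | f i = m} := by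
        ext i; simp [Nat.lt_succ_iff]
      rw [he]
      exact Set.Finite.biUnion (Finset.range (f j + 1)).finite_toSet fun m _ => hf m
    have h2 : {i | i ≤ j ∨ f i ≤ f j}.Finite := by
      have he : {i | i ≤ j ∨ f i ≤ f j} = Set.Iic j ∪ {i | f i ≤ f j} := by
        ext i; simp only [Set.mem_setOf_eq, Set.mem_union, Set.mem_Iic]
      rw [he]
      exact (Set.finite_Iic j).union h1
    obtain ⟨i, hi⟩ : ∃ i, i ∉ {i | i ≤ j ∨ f i ≤ f j} := by
      by_contra hc
      push_neg at hc
      exact Set.infinite_univ (h2.subset fun i _ => hc i)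
    simp only [Set.mem_setOf_eq] at hi
    push_neg at hi
    exact ⟨i, hi.1, hi.2⟩
  choose g hg1 hg2 using key
  refine ⟨fun t => g^[t] 0, strictMono_nat_of_lt_succ fun t => ?_,
    strictMono_nat_of_lt_succ fun t => ?_⟩
  · rw [Function.iterate_succ_apply' g t 0]
    exact hg1 _
  · show f (g^[t] 0) < f (g^[t + 1] 0)
    rw [Function.iterate_succ_apply' g t 0]
    exact hg2 _

theorem hetero_theorem_finite_hitting_set (d q : ℕ)
    (ℬ 𝒮 : Set (Set (EuclideanSpace ℝ (Fin d))))
    (Hmono : ∀ 𝓕 ⊆ ℬ, AlephProp q 𝒮 𝓕 → FinPierceBy 𝒮 𝓕)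
    (Fam : ℕ → Set (Set (EuclideanSpace ℝ (Fin d))))
    (hFam : ∀ n, Fam n ⊆ ℬ) (hHet : HeteroProp q 𝒮 Fam) :
    ∃ N : ℕ, ∃ 𝒦 ⊆ 𝒮, 𝒦.Finite ∧
      ∀ n > N, ∀ C ∈ Fam n, ∃ A ∈ 𝒦, (A ∩ C).Nonempty := by
  classical
  have claim : ∃ N : ℕ, AlephProp q 𝒮 {C | ∃ n, N < n ∧ C ∈ Fam n} := by
    by_contra hcl
    push_neg at hcl
    -- Step 1: beyond every `N` there is a single family containing a "bad" sequence.
    have step : ∀ N : ℕ, ∃ m, N < m ∧ ∃ D : ℕ → Set (EuclideanSpace ℝ (Fin d)),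
        Function.Injective D ∧ (∀ j, D j ∈ Fam m) ∧
        ¬ ∃ A ∈ 𝒮, ∃ idx : Finset ℕ, idx.card = q ∧ ∀ n ∈ idx, (A ∩ D n).Nonempty := by
      intro N
      have hN : ¬ AlephProp q 𝒮 {C | ∃ n, N < n ∧ C ∈ Fam n} := hcl N
      rw [AlephProp] at hN
      push_neg at hN
      obtain ⟨B, hBinj, hBmem, hbad⟩ := hN
      have hbad' : ¬ ∃ A ∈ 𝒮, ∃ idx : Finset ℕ, idx.card = q ∧
          ∀ n ∈ idx, (A ∩ B n).Nonempty := by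
        rintro ⟨A, hA, idx, hcard, hp⟩
        obtain ⟨n, hn, hne⟩ := hbad A hA idx hcard
        exact (hp n hn).ne_empty hne
      have hBmem' : ∀ j, ∃ n, N < n ∧ B j ∈ Fam n := hBmem
      choose g hg1 hg2 using hBmem'
      by_cases hfib : ∀ m, {j | g j = m}.Finite
      · exfalso
        obtain ⟨φ, hφ, hgφ⟩ := hetero_ext_lemma g hfib
        obtain ⟨A, hA, idx, hcard, _, hp⟩ :=
          hHet (g ∘ φ) hgφ (fun t => B (φ t)) (fun t => hg2 (φ t))
        refine hbad' ⟨A, hA, idx.image φ, ?_, ?_⟩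
        · rw [Finset.card_image_of_injective _ hφ.injective, hcard]
        · intro n hn
          obtain ⟨t, ht, rfl⟩ := Finset.mem_image.mp hn
          exact hp t ht
      · push_neg at hfib
        obtain ⟨m, hminf⟩ := hfib
        have hminf' : {j | g j = m}.Infinite := hminf
        obtain ⟨φ, hφ, hφm⟩ := hetero_subseq_aux (fun j => g j = m) (fun N' => by
          obtain ⟨i, hi⟩ := (hminf'.diff (Set.finite_Iic N')).nonempty
          exact ⟨i, by simpa using hi.2, hi.1⟩)
        have hm : N < m := hφm 0 ▸ hg1 (φ 0)
        refine ⟨m, hm, fun j => B (φ j), hBinj.comp hφ.injective, fun j => ?_, ?_⟩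
        · have := hg2 (φ j); rwa [hφm j] at this
        · rintro ⟨A, hA, idx, hcard, hp⟩
          refine hbad' ⟨A, hA, idx.image φ, ?_, ?_⟩
          · rw [Finset.card_image_of_injective _ hφ.injective, hcard]
          · intro n hn
            obtain ⟨t, ht, rfl⟩ := Finset.mem_image.mp hn
            exact hp t ht
    choose m hlt D hinj hmem hbad using step
    -- the iterated column indices
    set pf : ℕ → ℕ := fun k => m^[k] 0 with hpfdef
    have hpsucc : ∀ k, pf (k + 1) = m (pf k) := fun k => Function.iterate_succ_apply' m k 0
    have hpmono : StrictMono pf := strictMono_nat_of_lt_succ fun k => by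
      rw [hpsucc]; exact hlt _
    -- the triangular family
    set 𝓕 : Set (Set (EuclideanSpace ℝ (Fin d))) :=
      {C | ∃ k, ∃ j, j < k ∧ C = D (pf k) j} with h𝓕def
    have h𝓕B : 𝓕 ⊆ ℬ := by
      rintro C ⟨k, j, _, rfl⟩
      exact hFam _ (hmem (pf k) j)
    have hAleph : AlephProp q 𝒮 𝓕 := by
      intro B hBinj hBmem
      have hBmem' : ∀ i, ∃ k, ∃ j, j < k ∧ B i = D (pf k) j := hBmem
      choose kw jw hjw hBeq using hBmem'
      have hfib : ∀ k, {i | kw i = k}.Finite := by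
        intro k
        have hsub : {i | kw i = k} ⊆ B ⁻¹' (D (pf k) '' Set.Iio k) := by
          intro i hi
          have hi' : kw i = k := hi
          exact ⟨jw i, by rw [← hi']; exact hjw i, by rw [← hi', ← hBeq i]⟩
        exact Set.Finite.subset
          (Set.Finite.preimage hBinj.injOn ((Set.finite_Iio k).image _)) hsub
      obtain ⟨φ, hφ, hkφ⟩ := hetero_ext_lemma kw hfib
      have hcolmono : StrictMono fun t => m (pf (kw (φ t))) := by
        intro a b hab
        have h1 : kw (φ a) < kw (φ b) := hkφ hab
        calc m (pf (kw (φ a))) = pf (kw (φ a) + 1) := (hpsucc _).symm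
          _ < pf (kw (φ b) + 1) := hpmono (by omega)
          _ = m (pf (kw (φ b))) := hpsucc _
      obtain ⟨A, hA, idx, hcard, _, hp⟩ := hHet _ hcolmono (fun t => B (φ t))
        (fun t => by show B (φ t) ∈ _; rw [hBeq (φ t)]; exact hmem _ _)
      refine ⟨A, hA, idx.image φ, ?_, ?_⟩
      · rw [Finset.card_image_of_injective _ hφ.injective, hcard]
      · intro n hn
        obtain ⟨t, ht, rfl⟩ := Finset.mem_image.mp hn
        exact hp t ht
    obtain ⟨T, hT𝒮, hTfin, hTp⟩ := Hmono 𝓕 h𝓕B hAleph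
    set Tf : Finset (Set (EuclideanSpace ℝ (Fin d))) := hTfin.toFinset with hTfdef
    set k0 : ℕ := (q - 1) * Tf.card + 1 with hk0def
    have hq1 : 1 ≤ q := by
      by_contra hq
      have hq0 : q = 0 := by omega
      refine hbad (pf k0) ?_
      obtain ⟨A, hAT, _⟩ := hTp (D (pf k0) 0) ⟨k0, 0, by omega, rfl⟩
      exact ⟨A, hT𝒮 hAT, ∅, by simp [hq0], by simp⟩
    have heach : ∀ j ∈ Finset.range k0, ∃ A, A ∈ Tf ∧ (A ∩ D (pf k0) j).Nonempty := by
      intro j hj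
      obtain ⟨A, hAT, hAp⟩ := hTp (D (pf k0) j) ⟨k0, j, Finset.mem_range.mp hj, rfl⟩
      exact ⟨A, hTfin.mem_toFinset.mpr hAT, hAp⟩
    choose! a ha hap using heach
    have hmaps : ∀ j ∈ Finset.range k0, a j ∈ Tf := ha
    have hcardlt : Tf.card * (q - 1) < (Finset.range k0).card := by
      rw [Finset.card_range, hk0def, Nat.mul_comm]
      exact Nat.lt_succ_self _
    obtain ⟨A, hATf, hAfib⟩ :=
      Finset.exists_lt_card_fiber_of_mul_lt_card_of_maps_to hmaps hcardlt
    obtain ⟨idx, hidxsub, hidxcard⟩ :=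
      Finset.exists_subset_card_eq (show q ≤ (Finset.filter (fun x => a x = A) (Finset.range k0)).card by omega)
    refine hbad (pf k0) ⟨A, hT𝒮 (hTfin.mem_toFinset.mp hATf), idx, hidxcard, ?_⟩
    intro n hnidx
    have hnf := hidxsub hnidx
    rw [Finset.mem_filter] at hnf
    have := hap n hnf.1
    rwa [hnf.2] at this
  obtain ⟨N, hN⟩ := claim
  obtain ⟨T, hT𝒮, hTfin, hTp⟩ := Hmono {C | ∃ n, N < n ∧ C ∈ Fam n}
    (fun C hC => by obtain ⟨n, _, hCn⟩ := hC; exact hFam n hCn) hN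
  exact ⟨N, T, hT𝒮, hTfin, fun n hn C hC => hTp C ⟨n, hn, hC⟩⟩
end

section
/- Let $\mathcal{F}$ be a family of compact convex sets in $\mathbb{R}^d$, $0 \leq k \leq d-1$, and $m \in \mathbb{N}$. If every finite subfamily of $\mathcal{F}$ can be pierced by $m$ $k$-flats, then $\mathcal{F}$ can be pierced by $m$ $k$-flats. -/
/-!
Two compactness arguments. Colour each member of `𝓕` by the index of a flat piercing it; the
colourings `Set ℝᵈ → Fin m` form a compact space, and in each finite subfamily the colourings
whose colour classes are each pierced by a single `k`-flat form a nonempty closed set, so one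
colouring works for all finite subfamilies at once. It remains to pierce each colour class by one
flat: flats meeting a fixed member `B₀` are parametrised by a point of `B₀` and an orthonormal
`k`-frame, a compact set in which the flats meeting a compact set `B` form a closed subset.
-/

/-- A `k`-flat in `ℝ^d`: a (nonempty) affine subspace of dimension `k`. -/
def IsKFlat {d : ℕ} (k : ℕ) (F : Set (EuclideanSpace ℝ (Fin d))) : Prop :=
  ∃ A : AffineSubspace ℝ (EuclideanSpace ℝ (Fin d)),
    (A : Set (EuclideanSpace ℝ (Fin d))).Nonempty ∧
    Module.finrank ℝ A.direction = k ∧ F = ↑A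

/-- A collection `T` of `k`-flats pierces the family `𝓕`. -/
def PiercedByFlats {d : ℕ} (k : ℕ) (T 𝓕 : Set (Set (EuclideanSpace ℝ (Fin d)))) : Prop :=
  (∀ f ∈ T, IsKFlat k f) ∧ ∀ B ∈ 𝓕, ∃ f ∈ T, (B ∩ f).Nonempty

/-- The family `𝓕` is pierceable by finitely many `k`-flats. -/
def FinFlatPierceable {d : ℕ} (k : ℕ) (𝓕 : Set (Set (EuclideanSpace ℝ (Fin d)))) : Prop :=
  ∃ T : Set (Set (EuclideanSpace ℝ (Fin d))), T.Finite ∧ PiercedByFlats k T 𝓕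

/-- The family `𝓕` is pierceable by finitely many points. -/
def FinPointPierceable {d : ℕ} (𝓕 : Set (Set (EuclideanSpace ℝ (Fin d)))) : Prop :=
  ∃ P : Set (EuclideanSpace ℝ (Fin d)), P.Finite ∧ ∀ B ∈ 𝓕, ∃ p ∈ P, p ∈ B

/-- In-radius: the radius of a largest closed ball contained in `S`. -/
noncomputable def inradius {d : ℕ} (S : Set (EuclideanSpace ℝ (Fin d))) : ℝ :=
  sSup {r : ℝ | ∃ c, Metric.closedBall c r ⊆ S}

/-- Out-radius: the radius of the smallest closed ball containing `S`. -/
noncomputable def circumradius {d : ℕ} (S : Set (EuclideanSpace ℝ (Fin d))) : ℝ :=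
  sInf {R : ℝ | 0 ≤ R ∧ ∃ c, S ⊆ Metric.closedBall c R}

/-- Condition number of a set: in-radius over out-radius. -/
noncomputable def condNumber {d : ℕ} (S : Set (EuclideanSpace ℝ (Fin d))) : ℝ :=
  inradius S / circumradius S

open Set Submodule
open scoped InnerProductSpace

section Frames

variable {E : Type*} [NormedAddCommGroup E] [InnerProductSpace ℝ E] {ι : Type*}

theorem Orthonormal.mem_span_range_iff_sum_inner_smul [Fintype ι] {v : ι → E}
    (hv : Orthonormal ℝ v) {y : E} : y ∈ span ℝ (range v) ↔ ∑ i, ⟪v i, y⟫_ℝ • v i = y := by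
  refine ⟨fun hy => ?_, fun hy => hy ▸ sum_mem fun i _ =>
    smul_mem _ _ (subset_span (mem_range_self i))⟩
  obtain ⟨t, rfl⟩ := (mem_span_range_iff_exists_fun ℝ).mp hy
  simp only [hv.inner_right_fintype]

theorem isClosed_setOf_orthonormal : IsClosed {v : ι → E | Orthonormal ℝ v} := by
  classical
  simp only [orthonormal_iff_ite, ofPred_forall]
  exact isClosed_iInter fun i => isClosed_iInter fun j =>
    isClosed_eq ((continuous_apply i).inner (continuous_apply j)) continuous_const

theorem isCompact_setOf_orthonormal [ProperSpace E] : IsCompact {v : ι → E | Orthonormal ℝ v} :=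
  (isCompact_univ_pi fun _ => isCompact_sphere (0 : E) 1).of_isClosed_subset
    isClosed_setOf_orthonormal fun v hv i _ => by simpa using hv.1 i

theorem isClosed_setOf_orthonormal_and_mem_span [Fintype ι] :
    IsClosed {q : (ι → E) × E | Orthonormal ℝ q.1 ∧ q.2 ∈ span ℝ (range q.1)} := by
  have : {q : (ι → E) × E | Orthonormal ℝ q.1 ∧ q.2 ∈ span ℝ (range q.1)} =
      {q | Orthonormal ℝ q.1} ∩ {q | ∑ i, ⟪q.1 i, q.2⟫_ℝ • q.1 i = q.2} := by
    ext q
    exact and_congr_right fun hv => hv.mem_span_range_iff_sum_inner_smul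
  rw [this]
  exact (isClosed_setOf_orthonormal.preimage continuous_fst).inter <|
    isClosed_eq (continuous_finsetSum _ fun i _ =>
      ((continuous_apply i).comp continuous_fst |>.inner continuous_snd).smul
        ((continuous_apply i).comp continuous_fst)) continuous_snd

end Frames

theorem IsCompact.isClosed_setOf_exists_mem {X Y : Type*} [TopologicalSpace X]
    [TopologicalSpace Y] {K : Set Y} (hK : IsCompact K) {S : Set (X × Y)} (hS : IsClosed S) :
    IsClosed {x | ∃ y ∈ K, (x, y) ∈ S} := by
  have : CompactSpace K := isCompact_iff_compactSpace.mp hK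
  convert isClosedMap_fst_of_compactSpace (X := X) (Y := K) _ <|
    hS.preimage (continuous_fst.prodMk (continuous_subtype_val.comp continuous_snd))
  ext x
  simp

section Flats

variable {d k : ℕ}

theorem isKFlat_mk'_span_orthonormal (p : EuclideanSpace ℝ (Fin d))
    {v : Fin k → EuclideanSpace ℝ (Fin d)} (hv : Orthonormal ℝ v) :
    IsKFlat k (AffineSubspace.mk' p (span ℝ (range v)) : Set (EuclideanSpace ℝ (Fin d))) := by
  refine ⟨_, ⟨p, AffineSubspace.self_mem_mk' _ _⟩, ?_, rfl⟩
  rw [AffineSubspace.direction_mk', finrank_span_eq_card hv.linearIndependent, Fintype.card_fin]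

theorem IsKFlat.exists_eq_mk'_span_orthonormal {F : Set (EuclideanSpace ℝ (Fin d))}
    (hF : IsKFlat k F) {p : EuclideanSpace ℝ (Fin d)} (hp : p ∈ F) :
    ∃ v : Fin k → EuclideanSpace ℝ (Fin d), Orthonormal ℝ v ∧
      F = AffineSubspace.mk' p (span ℝ (range v)) := by
  obtain ⟨A, -, hdim, rfl⟩ := hF
  let b := (stdOrthonormalBasis ℝ A.direction).reindex (finCongr hdim)
  refine ⟨fun i => b i, b.orthonormal.comp_linearIsometry A.direction.subtypeₗᵢ, ?_⟩
  have hspan : span ℝ (range fun i => (b i : EuclideanSpace ℝ (Fin d))) = A.direction := by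
    rw [range_comp' .., ← A.direction.coe_subtype, span_image, ← b.coe_toBasis, b.toBasis.span_eq,
      map_subtype_top]
  rw [hspan, AffineSubspace.mk'_eq hp]

end Flats

section Piercing

variable {d k m : ℕ}

theorem isClosed_setOf_orthonormal_and_inter_mk'_nonempty {B : Set (EuclideanSpace ℝ (Fin d))}
    (hB : IsCompact B) :
    IsClosed {q : EuclideanSpace ℝ (Fin d) × (Fin k → EuclideanSpace ℝ (Fin d)) |
      Orthonormal ℝ q.2 ∧ (B ∩ AffineSubspace.mk' q.1 (span ℝ (range q.2))).Nonempty} := by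
  convert hB.isClosed_setOf_exists_mem <|
    (isClosed_setOf_orthonormal_and_mem_span (ι := Fin k)).preimage <|
      (continuous_snd.comp continuous_fst).prodMk
        (continuous_snd.sub (continuous_fst.comp continuous_fst)) using 1
  ext q
  simp only [Set.Nonempty, mem_inter_iff, SetLike.mem_coe, AffineSubspace.mem_mk', vsub_eq_sub,
    mem_ofPred_eq, mem_preimage]
  tauto

theorem exists_kFlat_meeting_of_forall_finite {𝓖 : Set (Set (EuclideanSpace ℝ (Fin d)))}
    (hcomp : ∀ B ∈ 𝓖, IsCompact B)
    (h : ∀ 𝓗 ⊆ 𝓖, 𝓗.Finite → ∃ F, IsKFlat k F ∧ ∀ B ∈ 𝓗, (B ∩ F).Nonempty) :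
    ∃ F, IsKFlat k F ∧ ∀ B ∈ 𝓖, (B ∩ F).Nonempty := by
  rcases 𝓖.eq_empty_or_nonempty with rfl | ⟨B₀, hB₀⟩
  · simpa using h ∅ subset_rfl finite_empty
  let meets (B : 𝓖) : Set (EuclideanSpace ℝ (Fin d) × (Fin k → EuclideanSpace ℝ (Fin d))) :=
    {q | Orthonormal ℝ q.2 ∧ (B.1 ∩ AffineSubspace.mk' q.1 (span ℝ (range q.2))).Nonempty}
  have hfinite (u : Finset 𝓖) : ((B₀ ×ˢ {v | Orthonormal ℝ v}) ∩ ⋂ B ∈ u, meets B).Nonempty := by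
    obtain ⟨F, hF, hF𝓗⟩ := h (insert B₀ (Subtype.val '' (u : Set 𝓖)))
      (insert_subset hB₀ (image_subset_iff.2 fun B _ => B.2)) ((u.finite_toSet.image _).insert _)
    obtain ⟨p, hpB₀, hpF⟩ := hF𝓗 B₀ (mem_insert _ _)
    obtain ⟨v, hv, rfl⟩ := hF.exists_eq_mk'_span_orthonormal hpF
    exact ⟨(p, v), ⟨hpB₀, hv⟩, mem_iInter₂.2 fun B hB =>
      ⟨hv, hF𝓗 B (mem_insert_of_mem _ (mem_image_of_mem _ hB))⟩⟩
  obtain ⟨⟨p, v⟩, ⟨-, hv⟩, hpv⟩ :=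
    ((hcomp B₀ hB₀).prod isCompact_setOf_orthonormal).inter_iInter_nonempty meets
      (fun B => isClosed_setOf_orthonormal_and_inter_mk'_nonempty (hcomp B B.2)) hfinite
  exact ⟨_, isKFlat_mk'_span_orthonormal p hv, fun B hB => (mem_iInter.1 hpv ⟨B, hB⟩).2⟩

def ColorClassesPierced (k : ℕ) (𝓖 : Set (Set (EuclideanSpace ℝ (Fin d))))
    (c : Set (EuclideanSpace ℝ (Fin d)) → Fin m) : Prop :=
  ∀ i, ∃ F, IsKFlat k F ∧ ∀ B ∈ 𝓖, c B = i → (B ∩ F).Nonempty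

theorem ColorClassesPierced.mono {𝓖 𝓗 : Set (Set (EuclideanSpace ℝ (Fin d)))}
    {c : Set (EuclideanSpace ℝ (Fin d)) → Fin m} (hc : ColorClassesPierced k 𝓖 c)
    (h𝓗 : 𝓗 ⊆ 𝓖) : ColorClassesPierced k 𝓗 c :=
  fun i => (hc i).imp fun _ hF => ⟨hF.1, fun B hB => hF.2 B (h𝓗 hB)⟩

theorem isClosed_setOf_colorClassesPierced {𝓖 : Set (Set (EuclideanSpace ℝ (Fin d)))}
    (h𝓖 : 𝓖.Finite) :
    IsClosed {c : Set (EuclideanSpace ℝ (Fin d)) → Fin m | ColorClassesPierced k 𝓖 c} := by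
  have : Finite 𝓖 := h𝓖
  have hrestrict : {c : Set (EuclideanSpace ℝ (Fin d)) → Fin m | ColorClassesPierced k 𝓖 c} =
      (fun c (B : 𝓖) => c B) ⁻¹'
        {r | ∀ i, ∃ F, IsKFlat k F ∧ ∀ B : 𝓖, r B = i → (B.1 ∩ F).Nonempty} := by
    ext c
    simp [ColorClassesPierced]
  rw [hrestrict]
  exact (isClosed_discrete _).preimage (continuous_pi fun B : 𝓖 => continuous_apply B.1)

theorem exists_colorClassesPierced [NeZero m] {F₀ : Set (EuclideanSpace ℝ (Fin d))}
    (hF₀ : IsKFlat k F₀) {T 𝓖 : Set (Set (EuclideanSpace ℝ (Fin d)))} (hT : T.Finite)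
    (hTm : T.ncard ≤ m) (hT𝓖 : PiercedByFlats k T 𝓖) :
    ∃ c : Set (EuclideanSpace ℝ (Fin d)) → Fin m, ColorClassesPierced k 𝓖 c := by
  classical
  have : Finite T := hT
  rw [← Nat.card_coe_set_eq] at hTm
  let e : T → Fin m := Fin.castLE hTm ∘ Finite.equivFin T
  have he : e.Injective := (Fin.castLE_injective hTm).comp (Finite.equivFin T).injective
  -- colour `e t` is pierced by the flat `t`, an unused colour by `F₀`
  let flat : Fin m → Set (EuclideanSpace ℝ (Fin d)) := Function.extend e Subtype.val fun _ => F₀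
  choose! f hfT hf using hT𝓖.2
  refine ⟨fun B => if hB : B ∈ 𝓖 then e ⟨f B, hfT B hB⟩ else 0,
    fun i => ⟨flat i, ?_, fun B hB hi => ?_⟩⟩
  · by_cases hi : ∃ t, e t = i
    · obtain ⟨t, rfl⟩ := hi
      simpa only [flat, he.extend_apply] using hT𝓖.1 t t.2
    · simpa only [flat, Function.extend_apply' _ _ _ hi] using hF₀
  · subst hi
    simpa only [flat, dif_pos hB, he.extend_apply] using hf B hB

theorem exists_coloring_forall_finite_colorClassesPierced [NeZero m]
    {F₀ : Set (EuclideanSpace ℝ (Fin d))} (hF₀ : IsKFlat k F₀)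
    {𝓕 : Set (Set (EuclideanSpace ℝ (Fin d)))}
    (h : ∀ 𝒢 ⊆ 𝓕, 𝒢.Finite → ∃ T : Set (Set (EuclideanSpace ℝ (Fin d))),
      T.Finite ∧ T.ncard ≤ m ∧ PiercedByFlats k T 𝒢) :
    ∃ c : Set (EuclideanSpace ℝ (Fin d)) → Fin m,
      ∀ 𝒢 ⊆ 𝓕, 𝒢.Finite → ColorClassesPierced k 𝒢 c := by
  let good (𝒢 : {𝒢 // 𝒢 ⊆ 𝓕 ∧ 𝒢.Finite}) : Set (Set (EuclideanSpace ℝ (Fin d)) → Fin m) :=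
    {c | ColorClassesPierced k 𝒢.1 c}
  have hfinite (u : Finset {𝒢 // 𝒢 ⊆ 𝓕 ∧ 𝒢.Finite}) : (univ ∩ ⋂ 𝒢 ∈ u, good 𝒢).Nonempty := by
    obtain ⟨T, hT, hTm, hTu⟩ := h (⋃ 𝒢 ∈ u, 𝒢.1) (iUnion₂_subset fun 𝒢 _ => 𝒢.2.1)
      (u.finite_toSet.biUnion fun 𝒢 _ => 𝒢.2.2)
    obtain ⟨c, hc⟩ := exists_colorClassesPierced hF₀ hT hTm hTu
    exact ⟨c, mem_univ c, mem_iInter₂.2 fun 𝒢 h𝒢 => hc.mono (subset_biUnion_of_mem h𝒢)⟩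
  obtain ⟨c, -, hc⟩ := isCompact_univ.inter_iInter_nonempty good
    (fun 𝒢 => isClosed_setOf_colorClassesPierced 𝒢.2.2) hfinite
  exact ⟨c, fun 𝒢 h𝒢 hfin => mem_iInter.1 hc ⟨𝒢, h𝒢, hfin⟩⟩

end Piercing

theorem stmt3_general (d k m : ℕ)
    (𝓕 : Set (Set (EuclideanSpace ℝ (Fin d))))
    (hcomp : ∀ S ∈ 𝓕, IsCompact S)
    (h : ∀ 𝒢 ⊆ 𝓕, 𝒢.Finite → ∃ T : Set (Set (EuclideanSpace ℝ (Fin d))),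
      T.Finite ∧ T.ncard ≤ m ∧ PiercedByFlats k T 𝒢) :
    ∃ T : Set (Set (EuclideanSpace ℝ (Fin d))),
      T.Finite ∧ T.ncard ≤ m ∧ PiercedByFlats k T 𝓕 := by
  rcases 𝓕.eq_empty_or_nonempty with rfl | ⟨B₀, hB₀⟩
  · exact ⟨∅, finite_empty, by simp, by simp [PiercedByFlats]⟩
  obtain ⟨T₀, hT₀, hT₀m, hT₀B₀⟩ := h {B₀} (singleton_subset_iff.2 hB₀) (finite_singleton B₀)
  obtain ⟨F₀, hF₀T₀, -⟩ := hT₀B₀.2 B₀ rfl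
  have : NeZero m := ⟨(((ncard_pos hT₀).2 ⟨F₀, hF₀T₀⟩).trans_le hT₀m).ne'⟩
  obtain ⟨c, hc⟩ := exists_coloring_forall_finite_colorClassesPierced (hT₀B₀.1 F₀ hF₀T₀) h
  have hclass (i : Fin m) : ∃ F, IsKFlat k F ∧ ∀ B ∈ {B ∈ 𝓕 | c B = i}, (B ∩ F).Nonempty :=
    exists_kFlat_meeting_of_forall_finite (fun B hB => hcomp B hB.1) fun 𝒢 h𝒢 hfin =>
      (hc 𝒢 (fun B hB => (h𝒢 hB).1) hfin i).imp fun _ hF =>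
        ⟨hF.1, fun B hB => hF.2 B hB (h𝒢 hB).2⟩
  choose F hF using hclass
  refine ⟨range F, finite_range F, ?_, forall_mem_range.2 fun i => (hF i).1,
    fun B hB => ⟨F (c B), mem_range_self _, (hF (c B)).2 B ⟨hB, rfl⟩⟩⟩
  rw [← image_univ]
  exact (ncard_image_le finite_univ).trans (by simp)

theorem stmt3 (d k m : ℕ) (hk : k ≤ d - 1)
    (𝓕 : Set (Set (EuclideanSpace ℝ (Fin d))))
    (hcomp : ∀ S ∈ 𝓕, IsCompact S) (hconv : ∀ S ∈ 𝓕, Convex ℝ S)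
    (h : ∀ 𝒢 ⊆ 𝓕, 𝒢.Finite → ∃ T : Set (Set (EuclideanSpace ℝ (Fin d))),
      T.Finite ∧ T.ncard ≤ m ∧ PiercedByFlats k T 𝒢) :
    ∃ T : Set (Set (EuclideanSpace ℝ (Fin d))),
      T.Finite ∧ T.ncard ≤ m ∧ PiercedByFlats k T 𝓕 :=
  stmt3_general d k m 𝓕 hcomp h
end

section
/- Let $\mathbb{F}$ be a family of compact convex sets in $\mathbb{R}^d$ with condition number at least $\sigma > 0$, not pierceable by finitely many points, such that there is a bounded convex open set $A$ whose closure intersects every member of $\mathbb{F}$. Then for every $R > 0$, the subfamily $\mathbb{F}_{>R}$ of sets in $\mathbb{F}$ whose circumradius exceeds $R$ is pierceable by finitely many points. -/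
theorem stmt4 (d : ℕ) (σ : ℝ) (hσ : 0 < σ)
    (𝓕 : Set (Set (EuclideanSpace ℝ (Fin d))))
    (hcomp : ∀ S ∈ 𝓕, IsCompact S) (hconv : ∀ S ∈ 𝓕, Convex ℝ S)
    (hcond : ∀ S ∈ 𝓕, σ ≤ condNumber S)
    (hnp : ¬ FinPointPierceable 𝓕)
    (A : Set (EuclideanSpace ℝ (Fin d)))
    (hAopen : IsOpen A) (hAbdd : Bornology.IsBounded A) (hAconv : Convex ℝ A)
    (hmeet : ∀ S ∈ 𝓕, (closure A ∩ S).Nonempty) :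
    ∀ R > (0 : ℝ), FinPointPierceable {S ∈ 𝓕 | R < circumradius S} := by
  intro R hR
  obtain ⟨M, hM⟩ := hAbdd.closure.subset_closedBall 0
  set δ : ℝ := σ * R / 2 with hδdef
  have hδ : 0 < δ := by positivity
  -- Key: every member of the subfamily contains a ball of radius δ centered in a fixed ball
  have key : ∀ S ∈ {S ∈ 𝓕 | R < circumradius S},
      ∃ q, q ∈ Metric.closedBall (0 : EuclideanSpace ℝ (Fin d)) (M + 4 * R) ∧
        Metric.closedBall q δ ⊆ S := by
    rintro S ⟨hS, hRS⟩
    have hC : (0 : ℝ) < circumradius S := lt_trans hR hRS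
    -- inradius ≥ σ * circumradius
    have hin : σ * circumradius S ≤ inradius S := by
      have := hcond S hS
      rw [condNumber, le_div_iff₀ hC] at this
      exact this
    -- a ball of radius > σC/2 inside S
    have hball : ∃ c ρ, σ * circumradius S / 2 < ρ ∧ Metric.closedBall c ρ ⊆ S := by
      by_contra h
      push_neg at h
      have hle : inradius S ≤ σ * circumradius S / 2 := by
        apply Real.sSup_le _ (by positivity)
        rintro r ⟨c, hc⟩
        by_contra hr
        exact h c r (lt_of_not_ge hr) hc
      nlinarith
    obtain ⟨c, ρ, hρ, hcρ⟩ := hball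
    have hρ0 : 0 < ρ := lt_of_le_of_lt (by positivity) hρ
    -- an enclosing ball of radius < 2C
    have henc : ∃ z R', S ⊆ Metric.closedBall z R' ∧ R' < 2 * circumradius S := by
      by_contra h
      push_neg at h
      have hne : {R : ℝ | 0 ≤ R ∧ ∃ c, S ⊆ Metric.closedBall c R}.Nonempty := by
        obtain ⟨r, hr⟩ := (hcomp S hS).isBounded.subset_closedBall 0
        exact ⟨max r 0, le_max_right _ _, 0,
          hr.trans (Metric.closedBall_subset_closedBall (le_max_left _ _))⟩
      have : 2 * circumradius S ≤ circumradius S := by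
        rw [circumradius]
        apply le_csInf hne
        rintro R' ⟨-, z, hz⟩
        exact h z R' hz
      linarith
    obtain ⟨z, R', hSz, hR'⟩ := henc
    obtain ⟨p, hpA, hpS⟩ := hmeet S hS
    have hcS : c ∈ S := hcρ (Metric.mem_closedBall_self hρ0.le)
    have hdcp : dist c p ≤ 2 * R' := by
      have h1 : dist c z ≤ R' := Metric.mem_closedBall.mp (hSz hcS)
      have h2 : dist p z ≤ R' := Metric.mem_closedBall.mp (hSz hpS)
      calc dist c p ≤ dist c z + dist z p := dist_triangle _ _ _
        _ = dist c z + dist p z := by rw [dist_comm z p]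
        _ ≤ 2 * R' := by linarith
    set t : ℝ := δ / ρ with htdef
    have ht0 : 0 < t := div_pos hδ hρ0
    have ht1 : t < 1 := by
      rw [htdef, div_lt_one hρ0]
      calc δ = σ * R / 2 := rfl
        _ < σ * circumradius S / 2 := by nlinarith
        _ < ρ := hρ
    set q : EuclideanSpace ℝ (Fin d) := p + t • (c - p) with hqdef
    refine ⟨q, ?_, ?_⟩
    · -- q in the fixed ball
      have hpM : ‖p‖ ≤ M := by
        have := hM hpA
        simpa [Metric.mem_closedBall, dist_zero_right] using this
      have hbound : t * dist c p ≤ 4 * R := by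
        have h1 : t * dist c p ≤ t * (2 * R') := by
          apply mul_le_mul_of_nonneg_left hdcp ht0.le
        have h2 : t * (2 * R') ≤ t * (4 * circumradius S) := by
          apply mul_le_mul_of_nonneg_left (by linarith [hC]) ht0.le
        have h3 : t * (4 * circumradius S) ≤ 4 * R := by
          rw [htdef, div_mul_eq_mul_div, div_le_iff₀ hρ0]
          have : σ * circumradius S / 2 ≤ ρ := hρ.le
          calc δ * (4 * circumradius S) = 4 * R * (σ * circumradius S / 2) := by
                rw [hδdef]; ring
            _ ≤ 4 * R * ρ := by nlinarith
        linarith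
      have : ‖q‖ ≤ M + 4 * R := by
        calc ‖q‖ = ‖p + t • (c - p)‖ := by rw [hqdef]
          _ ≤ ‖p‖ + ‖t • (c - p)‖ := norm_add_le _ _
          _ = ‖p‖ + t * dist c p := by
              rw [norm_smul, Real.norm_eq_abs, abs_of_pos ht0, dist_eq_norm]
          _ ≤ M + 4 * R := by linarith
      simpa [Metric.mem_closedBall, dist_zero_right] using this
    · -- ball of radius δ around q is in S
      intro x hx
      set y : EuclideanSpace ℝ (Fin d) := c + (ρ / δ) • (x - q) with hydef
      have hyS : y ∈ S := by
        apply hcρ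
        have : dist y c = (ρ / δ) * dist x q := by
          rw [hydef, dist_eq_norm, add_sub_cancel_left, norm_smul, Real.norm_eq_abs,
            abs_of_pos (div_pos hρ0 hδ), dist_eq_norm]
        rw [Metric.mem_closedBall, this]
        calc (ρ / δ) * dist x q ≤ (ρ / δ) * δ :=
              mul_le_mul_of_nonneg_left (Metric.mem_closedBall.mp hx) (div_pos hρ0 hδ).le
          _ = ρ := by field_simp
      have hxeq : x = (1 - t) • p + t • y := by
        have htρ : t * (ρ / δ) = 1 := by
          rw [htdef]; field_simp
        rw [hydef, hqdef]
        rw [smul_add, smul_smul, htρ, one_smul]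
        module
      rw [hxeq]
      exact hconv S hS hpS hyS (by linarith) ht0.le (by ring)
  -- finite δ-net of the fixed ball
  have hK : TotallyBounded (Metric.closedBall (0 : EuclideanSpace ℝ (Fin d)) (M + 4 * R)) :=
    (isCompact_closedBall _ _).totallyBounded
  obtain ⟨P, hPfin, hPcov⟩ := Metric.totallyBounded_iff.mp hK δ hδ
  refine ⟨P, hPfin, ?_⟩
  intro S hSmem
  obtain ⟨q, hqK, hqS⟩ := key S hSmem
  obtain ⟨p, hp, hpq⟩ := Set.mem_iUnion₂.mp (hPcov hqK)
  exact ⟨p, hp, hqS (Metric.mem_closedBall.mpr (by rw [dist_comm]; exact (Metric.mem_ball.mp hpq).le))⟩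
end

section
/- There exists an infinite sequence $\{B_n\}_{n\in\mathbb{N}}$ of compact connected subsets of $\mathbb{R}^2$, all with condition number at least some fixed $\rho > 0$, such that any two members of the sequence intersect, but the sequence is not pierceable by any finite set of points. -/
/-!
Take the tangents to the parabola `y = x²` at the points of abscissa `1 / (n + 1)`. Any two of
them meet at a point of abscissa in `[0, 1]`, while a point of the plane lies on at most two of
them, since the abscissae of the tangency points of the tangents through `p` are the roots of
`a² - 2 p₀ a + p₁`. Let `Bₙ` be the piece of the `n`-th tangent over `[0, 2(n + 1)]` together with
a disc of radius `n + 1` at its far end. The discs move off to the right, so each point lies in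
only finitely many `Bₙ`, and the disc makes the condition number at least `1 / 6`.
-/

open Metric Set Polynomial

lemma radius_le_of_closedBall_subset {E : Type*} [NormedAddCommGroup E] [NormedSpace ℝ E]
    [Nontrivial E] {c c' : E} {r R : ℝ} (hr : 0 ≤ r) (h : closedBall c r ⊆ closedBall c' R) :
    r ≤ R := by
  have hR : 0 ≤ R := dist_nonneg.trans (h (mem_closedBall_self hr))
  have hdiam := (diam_mono h isBounded_closedBall).trans (diam_closedBall hR)
  rw [diam_closedBall_eq c hr] at hdiam
  linarith

lemma div_le_condNumber {d : ℕ} [NeZero d] {S : Set (EuclideanSpace ℝ (Fin d))}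
    {c c' : EuclideanSpace ℝ (Fin d)} {r R : ℝ} (hr : 0 < r) (hin : closedBall c r ⊆ S)
    (hout : S ⊆ closedBall c' R) : r / R ≤ condNumber S := by
  have hrR : r ≤ R := radius_le_of_closedBall_subset hr.le (hin.trans hout)
  have h_inradius : r ≤ inradius S := by
    refine le_csSup ⟨R, ?_⟩ ⟨c, hin⟩
    rintro r' ⟨c'', hr'⟩
    rcases lt_or_ge r' 0 with hneg | hnonneg
    · linarith
    · exact radius_le_of_closedBall_subset hnonneg (hr'.trans hout)
  have h_circumradius_le : circumradius S ≤ R :=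
    csInf_le ⟨0, fun _ h => h.1⟩ ⟨hr.le.trans hrR, c', hout⟩
  have h_le_circumradius : r ≤ circumradius S :=
    le_csInf ⟨R, hr.le.trans hrR, c', hout⟩ fun _ ⟨_, _, h⟩ =>
      radius_le_of_closedBall_subset hr.le (hin.trans h)
  calc r / R ≤ inradius S / R := by gcongr; linarith
    _ ≤ inradius S / circumradius S := by gcongr <;> linarith

lemma not_exists_finite_piercing {ι X : Type*} [Infinite ι] {B : ι → Set X}
    (h : ∀ p, {i | p ∈ B i}.Finite) : ¬ ∃ P : Set X, P.Finite ∧ ∀ i, ∃ p ∈ P, p ∈ B i := by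
  rintro ⟨P, hP, hpierce⟩
  obtain ⟨i, hi⟩ := (hP.biUnion fun p _ => h p).infinite_compl.nonempty
  obtain ⟨p, hpP, hpi⟩ := hpierce i
  exact hi (mem_biUnion hpP hpi)

/-- The point of abscissa `x` on the tangent to the parabola `y = x²` at `(a, a²)`. -/
noncomputable def tangentPoint (a x : ℝ) : EuclideanSpace ℝ (Fin 2) := !₂[x, 2 * a * x - a ^ 2]

@[simp]
lemma tangentPoint_apply_zero (a x : ℝ) : tangentPoint a x 0 = x := rfl

@[simp]
lemma tangentPoint_apply_one (a x : ℝ) : tangentPoint a x 1 = 2 * a * x - a ^ 2 := rfl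

lemma continuous_tangentPoint (a : ℝ) : Continuous (tangentPoint a) := by
  unfold tangentPoint; fun_prop

lemma tangentPoint_midpoint_comm (a b : ℝ) :
    tangentPoint a ((a + b) / 2) = tangentPoint b ((a + b) / 2) := by
  ext i
  fin_cases i
  · rfl
  · simp only [Fin.mk_one, tangentPoint_apply_one]; ring

lemma dist_tangentPoint (a x y : ℝ) :
    dist (tangentPoint a x) (tangentPoint a y) = |x - y| * √(1 + 4 * a ^ 2) := by
  rw [EuclideanSpace.dist_eq, ← Real.sqrt_sq_eq_abs, ← Real.sqrt_mul (sq_nonneg _)]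
  congr 1
  simp only [Fin.sum_univ_two, tangentPoint_apply_zero, tangentPoint_apply_one, Real.dist_eq,
    sq_abs]
  ring

noncomputable def lollipop (r : ℝ) : Set (EuclideanSpace ℝ (Fin 2)) :=
  tangentPoint r⁻¹ '' Icc 0 (2 * r) ∪ closedBall (tangentPoint r⁻¹ (2 * r)) r

lemma isCompact_lollipop (r : ℝ) : IsCompact (lollipop r) :=
  (isCompact_Icc.image (continuous_tangentPoint _)).union (isCompact_closedBall _ _)

lemma isConnected_lollipop {r : ℝ} (hr : 0 ≤ r) : IsConnected (lollipop r) := by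
  have hend : 2 * r ∈ Icc 0 (2 * r) := right_mem_Icc.2 (by linarith)
  exact IsConnected.union ⟨_, mem_image_of_mem _ hend, mem_closedBall_self hr⟩
    ((isConnected_Icc (by linarith)).image _ (continuous_tangentPoint _).continuousOn)
    ((convex_closedBall _ _).isConnected ⟨_, mem_closedBall_self hr⟩)

lemma lollipop_subset_closedBall {r : ℝ} (hr : 1 ≤ r) :
    lollipop r ⊆ closedBall (tangentPoint r⁻¹ (2 * r)) (6 * r) := by
  rintro _ (⟨x, ⟨hx0, hx⟩, rfl⟩ | hp)
  · have hinv : r⁻¹ ^ 2 ≤ 1 := pow_le_one₀ (by positivity) (inv_le_one_of_one_le₀ hr)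
    have hsqrt : √(1 + 4 * r⁻¹ ^ 2) ≤ 3 := Real.sqrt_le_iff.2 ⟨by norm_num, by linarith⟩
    rw [mem_closedBall, dist_tangentPoint, abs_of_nonpos (by linarith)]
    calc -(x - 2 * r) * √(1 + 4 * r⁻¹ ^ 2) ≤ 2 * r * 3 := by gcongr; linarith
      _ = 6 * r := by ring
  · exact closedBall_subset_closedBall (by linarith) hp

lemma one_div_six_le_condNumber_lollipop {r : ℝ} (hr : 1 ≤ r) :
    1 / 6 ≤ condNumber (lollipop r) := by
  have h := div_le_condNumber (by positivity) subset_union_right (lollipop_subset_closedBall hr)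
  rwa [div_mul_cancel_right₀ (by positivity), ← one_div] at h

lemma tangentPoint_mem_lollipop {r x : ℝ} (hr : 1 ≤ r) (hx0 : 0 ≤ x) (hx1 : x ≤ 1) :
    tangentPoint r⁻¹ x ∈ lollipop r :=
  Or.inl (mem_image_of_mem _ ⟨hx0, by linarith⟩)

lemma lollipop_inter_nonempty {r s : ℝ} (hr : 1 ≤ r) (hs : 1 ≤ s) :
    (lollipop r ∩ lollipop s).Nonempty := by
  have hr' := inv_le_one_of_one_le₀ hr
  have hs' := inv_le_one_of_one_le₀ hs
  refine ⟨_, tangentPoint_mem_lollipop hr (by positivity) (by linarith : (r⁻¹ + s⁻¹) / 2 ≤ 1), ?_⟩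
  rw [tangentPoint_midpoint_comm, add_comm]
  exact tangentPoint_mem_lollipop hs (by positivity) (by linarith)

lemma inv_isRoot_or_le_of_mem_lollipop {r : ℝ} {p : EuclideanSpace ℝ (Fin 2)}
    (hp : p ∈ lollipop r) : r⁻¹ ^ 2 - 2 * p 0 * r⁻¹ + p 1 = 0 ∨ r ≤ p 0 := by
  rcases hp with ⟨x, -, rfl⟩ | hp
  · left
    simp only [tangentPoint_apply_zero, tangentPoint_apply_one]
    ring
  · right
    have h := (PiLp.dist_apply_le p _ 0).trans (mem_closedBall.1 hp)
    rw [tangentPoint_apply_zero, Real.dist_eq] at h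
    linarith [(abs_le.1 h).1]

lemma finite_setOf_mem_lollipop (p : EuclideanSpace ℝ (Fin 2)) :
    {n : ℕ | p ∈ lollipop (n + 1)}.Finite := by
  have hq : (X ^ 2 - C (2 * p 0) * X + C (p 1)).Monic := by monicity!
  have hinj : Function.Injective fun n : ℕ => ((n : ℝ) + 1)⁻¹ := fun m n h => by simpa using h
  refine (((finite_setOfPred_isRoot hq.ne_zero).preimage hinj.injOn).union
    (finite_lt_nat ⌈p 0⌉₊)).subset fun n hn => ?_
  rcases inv_isRoot_or_le_of_mem_lollipop hn with h | h
  · left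
    simpa only [mem_preimage, mem_ofPred_eq, IsRoot.def, eval_add, eval_sub, eval_mul, eval_pow,
      eval_X, eval_C] using h
  · exact Or.inr (Nat.lt_ceil.2 (by linarith))

lemma eq_of_lollipop_eq {r s : ℝ} (hr : 0 < r) (hs : 0 < s) (hrs : lollipop r = lollipop s) :
    r = s := by
  have hmem : tangentPoint s⁻¹ 0 ∈ lollipop r :=
    hrs ▸ Or.inl (mem_image_of_mem _ ⟨le_rfl, by linarith⟩)
  rcases inv_isRoot_or_le_of_mem_lollipop hmem with h | h
  · simp only [tangentPoint_apply_zero, tangentPoint_apply_one] at h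
    have hsq : r⁻¹ ^ 2 = s⁻¹ ^ 2 := by linarith
    exact inv_injective ((sq_eq_sq₀ (by positivity) (by positivity)).1 hsq)
  · rw [tangentPoint_apply_zero] at h
    linarith

theorem stmt9 :
    ∃ ρ : ℝ, 0 < ρ ∧
      ∃ B : ℕ → Set (EuclideanSpace ℝ (Fin 2)),
        Function.Injective B ∧
        (∀ n, IsCompact (B n) ∧ IsConnected (B n) ∧ ρ ≤ condNumber (B n)) ∧
        (∀ m n, (B m ∩ B n).Nonempty) ∧
        ¬ ∃ P : Set (EuclideanSpace ℝ (Fin 2)), P.Finite ∧ ∀ n, ∃ p ∈ P, p ∈ B n := by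
  have hone (n : ℕ) : (1 : ℝ) ≤ n + 1 := by simp
  refine ⟨1 / 6, by norm_num, fun n => lollipop (n + 1), fun m n h => ?_,
    fun n => ⟨isCompact_lollipop _, isConnected_lollipop (by positivity),
      one_div_six_le_condNumber_lollipop (hone n)⟩,
    fun m n => lollipop_inter_nonempty (hone m) (hone n),
    not_exists_finite_piercing finite_setOf_mem_lollipop⟩
  simpa using eq_of_lollipop_eq (by positivity) (by positivity) h
end

section
/- There exists an infinite family $\mathcal{F}$ of (not necessarily axis-parallel) closed rectangles in $\mathbb{R}^2$, each with positive area and diameter bounded by a uniform constant, such that any two members of $\mathcal{F}$ intersect, yet no finite set of points in $\mathbb{R}^2$ pierces all members of $\mathcal{F}$. -/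
/-- A (not necessarily axis-parallel) closed rectangle with nonempty interior in the
Euclidean plane: the image of a nondegenerate axis-parallel box under an isometry of
the plane. -/
def IsRectangle (F : Set (EuclideanSpace ℝ (Fin 2))) : Prop :=
  ∃ (g : EuclideanSpace ℝ (Fin 2) ≃ᵢ EuclideanSpace ℝ (Fin 2)) (a₁ b₁ a₂ b₂ : ℝ),
    a₁ < b₁ ∧ a₂ < b₂ ∧
    F = g '' {x : EuclideanSpace ℝ (Fin 2) | x 0 ∈ Set.Icc a₁ b₁ ∧ x 1 ∈ Set.Icc a₂ b₂}

/-!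
Take the rectangles `R θ` lying just outside the unit disc, with a long side of length `2` on the
tangent to the unit circle at angle `θ` and of thickness `θ ^ 2`, for `θ = 1 / (n + 1)`.
Two tangents at angles differing by at most `π / 2` meet within distance `1` of both points of
tangency, so these rectangles pairwise intersect. On the other hand every point leaves `R θ` as
`θ → 0⁺`, so no finite set pierces the family, which is therefore infinite.
-/

open Real Filter Set Topology
open Complex (I orthonormalBasisOneI mem_reProdIm)

def Pierces {α : Type*} (P : Set α) (𝓕 : Set (Set α)) : Prop :=
  ∀ F ∈ 𝓕, ∃ p ∈ P, p ∈ F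

lemma infinite_of_not_exists_finite_pierces {α : Type*} {𝓕 : Set (Set α)}
    (hne : ∀ F ∈ 𝓕, F.Nonempty) (h : ¬ ∃ P : Set α, P.Finite ∧ Pierces P 𝓕) : 𝓕.Infinite :=
  fun hfin => h ⟨_, hfin.dependent_image fun F hF => (hne F hF).some,
    fun F hF => ⟨_, ⟨F, hF, rfl⟩, (hne F hF).some_mem⟩⟩

lemma not_exists_finite_pierces_range {ι α : Type*} {l : Filter ι} [l.NeBot] {F : ι → Set α}
    (h : ∀ p, ∀ᶠ i in l, p ∉ F i) : ¬ ∃ P : Set α, P.Finite ∧ Pierces P (range F) := by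
  rintro ⟨P, hP, hpierce⟩
  obtain ⟨i, hi⟩ := (hP.eventually_all.2 fun p _ => h p).exists
  obtain ⟨p, hpP, hpF⟩ := hpierce (F i) (mem_range_self i)
  exact hi p hpP hpF

lemma isRectangle_image_reProdIm (g : ℂ ≃ᵢ ℂ) {a₁ b₁ a₂ b₂ : ℝ} (h₁ : a₁ < b₁) (h₂ : a₂ < b₂) :
    IsRectangle (orthonormalBasisOneI.repr '' (g '' (Icc a₁ b₁ ×ℂ Icc a₂ b₂))) := by
  let e := orthonormalBasisOneI.repr.toIsometryEquiv
  refine ⟨(e.symm.trans g).trans e, a₁, b₁, a₂, b₂, h₁, h₂, ?_⟩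
  have hbox : {x : EuclideanSpace ℝ (Fin 2) | x 0 ∈ Icc a₁ b₁ ∧ x 1 ∈ Icc a₂ b₂} =
      e '' (Icc a₁ b₁ ×ℂ Icc a₂ b₂) := by
    rw [← e.preimage_symm]
    ext x
    simp [e, mem_reProdIm]
  rw [hbox, ← image_comp, ← image_comp]
  congr 1
  ext z
  simp [e]

lemma diam_reProdIm_Icc_le {a b c d : ℝ} (hab : a ≤ b) (hcd : c ≤ d) :
    Metric.diam (Icc a b ×ℂ Icc c d) ≤ (b - a) + (d - c) := by
  refine Metric.diam_le_of_forall_dist_le (by linarith) fun z hz w hw => ?_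
  rw [mem_reProdIm, mem_Icc, mem_Icc] at hz hw
  calc dist z w ≤ |(z - w).re| + |(z - w).im| :=
        (dist_eq_norm z w).trans_le (Complex.norm_le_abs_re_add_abs_im _)
    _ ≤ (b - a) + (d - c) := by
      rw [Complex.sub_re, Complex.sub_im]
      gcongr <;> rw [abs_sub_le_iff] <;> constructor <;> linarith

lemma abs_tan_le_one {φ : ℝ} (hφ : |φ| ≤ π / 4) : |tan φ| ≤ 1 := by
  rw [abs_le] at hφ ⊢
  have hπ := pi_pos
  have hmono := strictMonoOn_tan.monotoneOn
  constructor
  · calc (-1 : ℝ) = tan (-(π / 4)) := by rw [tan_neg, tan_pi_div_four]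
      _ ≤ tan φ := hmono ⟨by linarith, by linarith⟩ ⟨by linarith, by linarith⟩ hφ.1
  · calc tan φ ≤ tan (π / 4) := hmono ⟨by linarith, by linarith⟩ ⟨by linarith, by linarith⟩ hφ.2
      _ = 1 := tan_pi_div_four

noncomputable def tangentRect (θ : ℝ) : Set ℂ :=
  rotation (Circle.exp θ) '' (Icc 1 (1 + θ ^ 2) ×ℂ Icc (-1) 1)

lemma mem_tangentRect {θ : ℝ} {z : ℂ} :
    z ∈ tangentRect θ ↔ Complex.exp (-θ * I) * z ∈ Icc 1 (1 + θ ^ 2) ×ℂ Icc (-1) 1 := by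
  rw [tangentRect, LinearIsometryEquiv.image_eq_preimage_symm, rotation_symm, ← Circle.exp_neg,
    mem_preimage, rotation_apply, Circle.coe_exp, Complex.ofReal_neg]

lemma re_exp_neg_mul_I_mul (θ : ℝ) (z : ℂ) :
    (Complex.exp (-θ * I) * z).re = z.re * cos θ + z.im * sin θ := by
  rw [Complex.mul_re, ← Complex.ofReal_neg, Complex.exp_ofReal_mul_I_re,
    Complex.exp_ofReal_mul_I_im, cos_neg, sin_neg]
  ring

lemma isRectangle_tangentRect {θ : ℝ} (hθ : θ ≠ 0) :
    IsRectangle (orthonormalBasisOneI.repr '' tangentRect θ) :=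
  isRectangle_image_reProdIm (rotation (Circle.exp θ)).toIsometryEquiv
    (lt_add_of_pos_right 1 (by positivity)) (by norm_num)

lemma diam_tangentRect_le (θ : ℝ) :
    Metric.diam (orthonormalBasisOneI.repr '' tangentRect θ) ≤ θ ^ 2 + 2 := by
  rw [LinearIsometryEquiv.diam_image, tangentRect, LinearIsometryEquiv.diam_image]
  convert diam_reProdIm_Icc_le (by nlinarith : (1 : ℝ) ≤ 1 + θ ^ 2) (by norm_num : (-1 : ℝ) ≤ 1)
    using 1
  ring

/-- The tangents to the unit circle at `exp (θ * I)` and `exp ((θ + 2 * φ) * I)` meet at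
`exp ((θ + φ) * I) / cos φ`. -/
lemma exp_mul_I_div_cos_mem_tangentRect (θ : ℝ) {φ : ℝ} (hφ : |φ| ≤ π / 4) :
    Complex.exp ((θ + φ) * I) / (cos φ : ℂ) ∈ tangentRect θ := by
  have hcos : 0 < cos φ := cos_pos_of_mem_Ioo ⟨by linarith [(abs_le.1 hφ).1, pi_pos],
    by linarith [(abs_le.1 hφ).2, pi_pos]⟩
  have hrot : Complex.exp (-θ * I) * (Complex.exp ((θ + φ) * I) / (cos φ : ℂ)) =
      Complex.exp (φ * I) / (cos φ : ℂ) := by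
    rw [mul_div_assoc', ← Complex.exp_add]
    ring_nf
  rw [mem_tangentRect, hrot, mem_reProdIm, Complex.div_ofReal_re, Complex.div_ofReal_im,
    Complex.exp_ofReal_mul_I_re, Complex.exp_ofReal_mul_I_im, div_self hcos.ne',
    ← tan_eq_sin_div_cos, mem_Icc, mem_Icc, ← abs_le]
  exact ⟨⟨le_rfl, by nlinarith⟩, abs_tan_le_one hφ⟩

lemma tangentRect_inter_nonempty {α β : ℝ} (h : |α - β| ≤ π / 2) :
    (tangentRect α ∩ tangentRect β).Nonempty := by
  have hαβ : |(β - α) / 2| ≤ π / 4 := by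
    rw [abs_div, abs_sub_comm, abs_two]; linarith
  have hβα : |(α - β) / 2| ≤ π / 4 := by
    rw [abs_div, abs_two]; linarith
  refine ⟨_, exp_mul_I_div_cos_mem_tangentRect α hαβ, ?_⟩
  convert exp_mul_I_div_cos_mem_tangentRect β hβα using 3
  · push_cast; ring_nf
  · rw [← cos_neg]; ring_nf

lemma one_add_sq_lt_cos_add_mul_sin {y θ : ℝ} (hθ : 0 < θ) (hθ₁ : θ ≤ 1) (hθy : 2 * θ < y) :
    1 + θ ^ 2 < cos θ + y * sin θ := by
  have hsin := sin_gt_sub_cube hθ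
  have hcos : 1 - θ ^ 2 / 2 ≤ cos θ := one_sub_sq_div_two_le_cos
  have hθ₃ : θ ^ 3 ≤ θ := by nlinarith [pow_le_one₀ hθ.le hθ₁ (n := 2)]
  have hy : 0 < y := by linarith
  calc 1 + θ ^ 2 < 1 - θ ^ 2 / 2 + 2 * θ * (θ - θ ^ 3 / 6) := by nlinarith
    _ ≤ cos θ + y * sin θ := by
      gcongr
      nlinarith [mul_lt_mul_of_pos_left hsin hy, mul_lt_mul_of_pos_right hθy (by nlinarith :
        0 < θ - θ ^ 3 / 6)]

/-- Off the line `x = 1` this is continuity. On it, a point with `y > 0` moves away from the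
tangent at angle `θ` at rate `≈ y * θ`, faster than the thickness `θ ^ 2` shrinks. -/
lemma eventually_notMem_Icc_mul_cos_add_mul_sin {ι : Type*} {l : Filter ι} {θ : ι → ℝ}
    (hθ : Tendsto θ l (𝓝[>] 0)) (x y : ℝ) :
    ∀ᶠ i in l, x * cos (θ i) + y * sin (θ i) ∉ Icc 1 (1 + θ i ^ 2) := by
  have hθ₀ : Tendsto θ l (𝓝 0) := tendsto_nhds_of_tendsto_nhdsWithin hθ
  have hpos : ∀ᶠ i in l, 0 < θ i := eventually_mem_of_tendsto_nhdsWithin hθ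
  have hlim : Tendsto (fun i => x * cos (θ i) + y * sin (θ i)) l (𝓝 x) := by
    have hcont : Continuous fun t => x * cos t + y * sin t := by fun_prop
    simpa [Function.comp_def] using (hcont.tendsto 0).comp hθ₀
  rcases lt_trichotomy x 1 with hx | rfl | hx
  · filter_upwards [hlim.eventually_lt_const hx] with i hi hmem
    exact hi.not_ge hmem.1
  · rcases le_or_gt y 0 with hy | hy
    · filter_upwards [hpos, hθ₀.eventually_lt_const pi_pos] with i hi hiπ hmem
      have hcos : cos (θ i) < 1 := by
        simpa using cos_lt_cos_of_nonneg_of_le_pi le_rfl hiπ.le hi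
      have hsin : 0 ≤ sin (θ i) := sin_nonneg_of_nonneg_of_le_pi hi.le hiπ.le
      nlinarith [hmem.1]
    · filter_upwards [hpos, hθ₀.eventually_lt_const one_pos,
        hθ₀.eventually_lt_const (half_pos hy)] with i hi hi₁ hiy hmem
      have := one_add_sq_lt_cos_add_mul_sin (y := y) hi hi₁.le (by linarith)
      linarith [hmem.2]
  · have hlim' : Tendsto (fun i => x * cos (θ i) + y * sin (θ i) - θ i ^ 2) l (𝓝 x) := by
      simpa using hlim.sub (hθ₀.pow 2)
    filter_upwards [hlim'.eventually_const_lt hx] with i hi hmem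
    linarith [hmem.2]

lemma eventually_notMem_tangentRect {ι : Type*} {l : Filter ι} {θ : ι → ℝ}
    (hθ : Tendsto θ l (𝓝[>] 0)) (z : ℂ) : ∀ᶠ i in l, z ∉ tangentRect (θ i) := by
  filter_upwards [eventually_notMem_Icc_mul_cos_add_mul_sin hθ z.re z.im] with i hi hmem
  rw [mem_tangentRect, mem_reProdIm, re_exp_neg_mul_I_mul] at hmem
  exact hi hmem.1

lemma not_exists_finite_pierces_range_image_tangentRect {ι : Type*} {l : Filter ι} [l.NeBot]
    {θ : ι → ℝ} (hθ : Tendsto θ l (𝓝[>] 0)) :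
    ¬ ∃ P : Set (EuclideanSpace ℝ (Fin 2)), P.Finite ∧
      Pierces P (range fun i => orthonormalBasisOneI.repr '' tangentRect (θ i)) :=
  not_exists_finite_pierces_range fun p =>
    (eventually_notMem_tangentRect hθ (orthonormalBasisOneI.repr.symm p)).mono
      fun _ hi hp => hi ((LinearIsometryEquiv.image_eq_preimage_symm _ _).subset hp)

theorem stmt10 :
    ∃ 𝓕 : Set (Set (EuclideanSpace ℝ (Fin 2))),
      𝓕.Infinite ∧
      (∀ F ∈ 𝓕, IsRectangle F) ∧
      (∃ D : ℝ, ∀ F ∈ 𝓕, Metric.diam F ≤ D) ∧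
      (∀ F ∈ 𝓕, ∀ G ∈ 𝓕, (F ∩ G).Nonempty) ∧
      ¬ ∃ P : Set (EuclideanSpace ℝ (Fin 2)), P.Finite ∧ ∀ F ∈ 𝓕, ∃ p ∈ P, p ∈ F := by
  set θ : ℕ → ℝ := fun n => 1 / (n + 1)
  have hθ : ∀ n, θ n ∈ Ioc 0 1 := fun n =>
    ⟨by positivity, div_le_one_of_le₀ (by simp) (by positivity)⟩
  have hlim : Tendsto θ atTop (𝓝[>] 0) :=
    tendsto_nhdsWithin_of_tendsto_nhds_of_eventually_within _
      tendsto_one_div_add_atTop_nhds_zero_nat (.of_forall fun n => (hθ n).1)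
  set F : ℕ → Set (EuclideanSpace ℝ (Fin 2)) :=
    fun n => orthonormalBasisOneI.repr '' tangentRect (θ n)
  have hinter : ∀ m n, (F m ∩ F n).Nonempty := fun m n => by
    rw [← image_inter orthonormalBasisOneI.repr.injective]
    refine (tangentRect_inter_nonempty ?_).image _
    rw [abs_le]
    constructor <;> linarith [(hθ m).1, (hθ m).2, (hθ n).1, (hθ n).2, pi_gt_three]
  have hpierce : ¬ ∃ P, P.Finite ∧ Pierces P (range F) :=
    not_exists_finite_pierces_range_image_tangentRect hlim
  refine ⟨range F, infinite_of_not_exists_finite_pierces ?_ hpierce, ?_, ⟨3, ?_⟩, ?_, hpierce⟩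
  · rintro _ ⟨n, rfl⟩
    simpa using hinter n n
  · rintro _ ⟨n, rfl⟩
    exact isRectangle_tangentRect (hθ n).1.ne'
  · rintro _ ⟨n, rfl⟩
    exact (diam_tangentRect_le _).trans (by nlinarith [(hθ n).1, (hθ n).2])
  · rintro _ ⟨m, rfl⟩ _ ⟨n, rfl⟩
    exact hinter m n
end

section
/- For each $n \in \mathbb{N}$, let $\mathcal{F}_n$ be a nonempty family of closed $(r,R)$-fat convex sets in $\mathbb{R}^d$ (with fixed $0 < r \leq R$). If every strictly heterochromatic sequence $\{B_n\}_{n\in\mathbb{N}}$ (with $B_n \in \mathcal{F}_n$ for all $n$) contains two distinct intersecting members, then there exist at least two distinct indices $i \neq j$ such that each of $\mathcal{F}_i$ and $\mathcal{F}_j$ is pierceable by finitely many points. -/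
/-- If a family of `(r,R)`-fat sets is not finitely pierceable, some member
avoids any given ball. -/
lemma escape_lemma {d : ℕ} {r R : ℝ} (hr : 0 < r)
    (𝓕 : Set (Set (EuclideanSpace ℝ (Fin d))))
    (hsets : ∀ C ∈ 𝓕, (∃ c, Metric.closedBall c r ⊆ C) ∧ (∃ c, C ⊆ Metric.closedBall c R))
    (hnp : ¬ FinPointPierceable 𝓕) (M : ℝ) :
    ∃ B ∈ 𝓕, Disjoint B (Metric.closedBall 0 M) := by
  have hK : IsCompact (Metric.closedBall (0 : EuclideanSpace ℝ (Fin d)) (M + 2*R)) :=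
    isCompact_closedBall _ _
  obtain ⟨t, htf, hcov⟩ := (Metric.totallyBounded_iff.mp hK.totallyBounded) r hr
  rw [FinPointPierceable] at hnp
  push_neg at hnp
  obtain ⟨B, hB, hBP⟩ := hnp t htf
  refine ⟨B, hB, Set.disjoint_left.mpr fun x hxB hxM => ?_⟩
  obtain ⟨⟨c', hc'⟩, ⟨c, hc⟩⟩ := hsets B hB
  have hc'B : c' ∈ B := hc' (Metric.mem_closedBall.mpr (by simp [hr.le]))
  have h1 : dist c' c ≤ R := hc hc'B
  have h2 : dist x c ≤ R := hc hxB
  have hx0 : dist x 0 ≤ M := Metric.mem_closedBall.mp hxM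
  have h3 : c' ∈ Metric.closedBall (0 : EuclideanSpace ℝ (Fin d)) (M + 2*R) := by
    rw [Metric.mem_closedBall]
    have t1 : dist c' (0 : EuclideanSpace ℝ (Fin d)) ≤ dist c' x + dist x 0 :=
      dist_triangle _ _ _
    have t2 : dist c' x ≤ dist c' c + dist c x := dist_triangle _ _ _
    have t3 : dist c x = dist x c := dist_comm _ _
    linarith
  obtain ⟨p, hp, hpc⟩ := Set.mem_iUnion₂.mp (hcov h3)
  exact hBP p hp (hc' (Metric.mem_closedBall.mpr (by
    rw [dist_comm]; exact (Metric.mem_ball.mp hpc).le)))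

theorem stmt13 (d : ℕ) (r R : ℝ) (hr : 0 < r) (hrR : r ≤ R)
    (Fam : ℕ → Set (Set (EuclideanSpace ℝ (Fin d))))
    (hne : ∀ n, (Fam n).Nonempty)
    (hsets : ∀ n, ∀ C ∈ Fam n, IsClosed C ∧ Convex ℝ C ∧
      (∃ c, Metric.closedBall c r ⊆ C) ∧ (∃ c, C ⊆ Metric.closedBall c R))
    (hweak : ∀ B : ℕ → Set (EuclideanSpace ℝ (Fin d)), (∀ n, B n ∈ Fam n) →
      ∃ m n, m ≠ n ∧ (B m ∩ B n).Nonempty) :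
    ∃ i j : ℕ, i ≠ j ∧ FinPointPierceable (Fam i) ∧ FinPointPierceable (Fam j) := by
  classical
  by_contra hcon
  push_neg at hcon
  -- There is an index i0 such that every other family fails to be finitely pierceable.
  obtain ⟨i0, hi0⟩ : ∃ i0, ∀ n, n ≠ i0 → ¬ FinPointPierceable (Fam n) := by
    by_cases h : ∃ i, FinPointPierceable (Fam i)
    · obtain ⟨i, hi⟩ := h
      exact ⟨i, fun n hn => hcon i n (fun e => hn e.symm) hi⟩
    · push_neg at h
      exact ⟨0, fun n _ => h n⟩
  -- every member of every family is contained in some ball around the origin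
  have hbd : ∀ n, ∀ C ∈ Fam n, ∃ s : ℝ, C ⊆ Metric.closedBall (0 : EuclideanSpace ℝ (Fin d)) s := by
    intro n C hC
    obtain ⟨c, hc⟩ := (hsets n C hC).2.2.2
    exact ⟨R + dist c 0, hc.trans (Metric.closedBall_subset_closedBall' le_rfl)⟩
  -- radius function
  set ρ : Set (EuclideanSpace ℝ (Fin d)) → ℝ := fun S =>
    if h : ∃ s : ℝ, S ⊆ Metric.closedBall (0 : EuclideanSpace ℝ (Fin d)) s then h.choose else 0 with hρdef
  have hρ : ∀ S : Set (EuclideanSpace ℝ (Fin d)), (∃ s : ℝ, S ⊆ Metric.closedBall (0 : EuclideanSpace ℝ (Fin d)) s) →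
      S ⊆ Metric.closedBall (0 : EuclideanSpace ℝ (Fin d)) (ρ S) := by
    intro S hS
    rw [hρdef]
    simp only [dif_pos hS]
    exact hS.choose_spec
  -- the distinguished member of the exceptional family
  obtain ⟨D, hD⟩ := hne i0
  -- escape choice function for all other families
  have hesc : ∀ n, n ≠ i0 → ∀ M : ℝ, ∃ B ∈ Fam n, Disjoint B (Metric.closedBall (0 : EuclideanSpace ℝ (Fin d)) M) := by
    intro n hn M
    exact escape_lemma hr (Fam n)
      (fun C hC => ⟨(hsets n C hC).2.2.1, (hsets n C hC).2.2.2⟩) (hi0 n hn) M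
  choose E hE1 hE2 using hesc
  -- the chosen member, at a given stage radius
  set pick : ℕ → ℝ → Set (EuclideanSpace ℝ (Fin d)) := fun n m =>
    if h : n = i0 then D else E n h m with hpickdef
  have hpickmem : ∀ n m, pick n m ∈ Fam n := by
    intro n m
    rw [hpickdef]
    by_cases h : n = i0
    · simp only [dif_pos h]; exact h ▸ hD
    · simp only [dif_neg h]; exact hE1 n h m
  -- radii sequence
  set M : ℕ → ℝ := fun n => Nat.rec (ρ D) (fun k ih => max ih (ρ (pick k ih))) n with hMdef
  have hMsucc : ∀ n, M (n + 1) = max (M n) (ρ (pick n (M n))) := fun n => rfl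
  have hMmono : Monotone M := monotone_nat_of_le_succ (fun n => by
    rw [hMsucc]; exact le_max_left _ _)
  set B : ℕ → Set (EuclideanSpace ℝ (Fin d)) := fun n => pick n (M n) with hBdef
  have hBmem : ∀ n, B n ∈ Fam n := fun n => hpickmem n (M n)
  have hBbd : ∀ n, B n ⊆ Metric.closedBall (0 : EuclideanSpace ℝ (Fin d)) (ρ (B n)) :=
    fun n => hρ _ (hbd n _ (hBmem n))
  have hDbd : D ⊆ Metric.closedBall (0 : EuclideanSpace ℝ (Fin d)) (ρ D) := hρ _ (hbd i0 D hD)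
  have hρDM : ∀ n, ρ D ≤ M n := fun n => hMmono (Nat.zero_le n)
  have hρBM : ∀ m n, m < n → ρ (B m) ≤ M n := by
    intro m n hmn
    have h1 : ρ (B m) ≤ M (m + 1) := by rw [hMsucc]; exact le_max_right _ _
    exact h1.trans (hMmono hmn)
  have hBi0 : B i0 = D := by rw [hBdef]; simp only [hpickdef, dif_pos rfl]
  have hdisj : ∀ n (h : n ≠ i0), Disjoint (B n) (Metric.closedBall (0 : EuclideanSpace ℝ (Fin d)) (M n)) := by
    intro n h
    have : B n = E n h (M n) := by rw [hBdef]; simp only [hpickdef, dif_neg h]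
    rw [this]
    exact hE2 n h (M n)
  -- pairwise disjointness
  have hpair : ∀ m n, m < n → Disjoint (B m) (B n) := by
    intro m n hmn
    by_cases h : n = i0
    · have hm : m ≠ i0 := by omega
      have : B n ⊆ Metric.closedBall (0 : EuclideanSpace ℝ (Fin d)) (M m) := by
        rw [h, hBi0]
        exact hDbd.trans (Metric.closedBall_subset_closedBall (hρDM m))
      exact ((hdisj m hm).mono_right this)
    · have hBm : B m ⊆ Metric.closedBall (0 : EuclideanSpace ℝ (Fin d)) (M n) := by
        by_cases hm : m = i0
        · rw [hm, hBi0]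
          exact hDbd.trans (Metric.closedBall_subset_closedBall (hρDM n))
        · exact (hBbd m).trans (Metric.closedBall_subset_closedBall (hρBM m n hmn))
      exact ((hdisj n h).mono_right hBm).symm
  obtain ⟨m, n, hmn, hint⟩ := hweak B hBmem
  rcases lt_or_gt_of_ne hmn with h | h
  · rw [Set.disjoint_iff_inter_eq_empty.mp (hpair m n h)] at hint
    exact Set.not_nonempty_empty hint
  · rw [Set.inter_comm, Set.disjoint_iff_inter_eq_empty.mp (hpair n m h)] at hint
    exact Set.not_nonempty_empty hint
end
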